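/- The operator logarithmic derivative with respect to φ, defined by L₃ = ∫₀^π ∫₀^{2π} (∂/∂φ)[log Q(r,θ,φ;θ₁,φ₁)] · Δ(θ₁,φ₁,1) · (sinθ₁/(2π)) dφ₁ dθ₁, equals (3/(4r²))·(2r + (1-r²)·log((1-r)/(1+r))) · [[0, -i·e^{-iφ}·sinθ],[i·e^{iφ}·sinθ, 0]], for 0 < r < 1. -/

import Mathlib

open Real Matrix MeasureTheory

noncomputable def husimiQ (r θ φ θ₁ φ₁ : ℝ) : ℝ :=
  (1 / 2) * (1 + r * Real.cos θ₁ * Real.cos θ + r * Real.cos (φ₁ - φ) * Real.sin θ₁ * Real.sin θ)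

/-- The Stratonovich–Weyl kernel with ordering parameter `s = 1`. -/
noncomputable def swKernelOne (θ φ : ℝ) : Matrix (Fin 2) (Fin 2) ℂ :=
  (1 / 2 : ℂ) •
    !![(1 + 3 * Real.cos θ : ℂ), 3 * Complex.exp (-Complex.I * φ) * Real.sin θ;
       3 * Complex.exp (Complex.I * φ) * Real.sin θ, (1 - 3 * Real.cos θ : ℂ)]

/-- The claimed closed form of the operator logarithmic derivative `L₃`. -/
noncomputable def L3 (r θ φ : ℝ) : Matrix (Fin 2) (Fin 2) ℂ :=
  ((3 / (4 * r ^ 2) * (2 * r + (1 - r ^ 2) * Real.log ((1 - r) / (1 + r))) : ℝ) : ℂ) •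
    !![0, -Complex.I * Complex.exp (-Complex.I * φ) * Real.sin θ;
       Complex.I * Complex.exp (Complex.I * φ) * Real.sin θ, 0]

/-!
With `A = 1 + r cos θ₁ cos θ` and `B = r sin θ₁ sin θ` one has `|B| < A`, `2Q = A + B cos (φ₁ - φ)`
and `∂_φ log Q = B sin (φ₁ - φ) / (A + B cos (φ₁ - φ))`, an odd `2π`-periodic function of `φ₁ - φ`.
Over a period it therefore integrates to `0` against the diagonal kernel entries, which do not
depend on `φ₁`, while against `e^{iφ₁}` it gives `i e^{iφ} ∫ B sin² x / (A + B cos x) dx`, which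
reduces to the classical `∫₀^{2π} dx / (A + B cos x) = 2π / √(A² - B²)`. Since
`A² - B² = (r cos θ₁ + cos θ)² + sin² θ (1 - r²)`, the substitution `t = cos θ₁` turns the
`θ₁`-integral into an elementary integral of `√(u² + k)`. The `(0, 1)` entry is the conjugate of
the `(1, 0)` entry because the kernel and `L3` are Hermitian.
-/

section PeriodIntegrals

variable {A B : ℝ}

lemma add_mul_pos_of_abs_le_one (h : |B| < A) {t : ℝ} (ht : |t| ≤ 1) : 0 < A + B * t := by
  have : |B * t| ≤ |B| := by
    rw [abs_mul]; exact mul_le_of_le_one_right (abs_nonneg B) ht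
  linarith [neg_abs_le (B * t)]

lemma integral_comp_cos_mul_sin {f : ℝ → ℝ} (hf : ContinuousOn f (Set.Icc (-1) 1)) (a b : ℝ) :
    ∫ x in a..b, f (cos x) * sin x = ∫ t in cos b..cos a, f t := by
  have hsub := intervalIntegral.integral_comp_mul_deriv' (a := a) (b := b) (f := cos)
    (fun x _ => hasDerivAt_cos x) continuous_sin.neg.continuousOn
    (hf.mono (by rintro _ ⟨x, -, rfl⟩; exact ⟨neg_one_le_cos x, cos_le_one x⟩))
  simp only [Function.comp_def, mul_neg, intervalIntegral.integral_neg] at hsub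
  rw [intervalIntegral.integral_symm (cos a) (cos b), ← hsub, neg_neg]

lemma integral_comp_cos_mul_sin_two_pi {f : ℝ → ℝ} (hf : ContinuousOn f (Set.Icc (-1) 1)) :
    ∫ x in (0:ℝ)..2 * π, f (cos x) * sin x = 0 := by
  rw [integral_comp_cos_mul_sin hf, cos_two_pi, cos_zero, intervalIntegral.integral_same]

lemma Continuous.div_add_mul_cos (h : |B| < A) {f : ℝ → ℝ} (hf : Continuous f) :
    Continuous fun x => f x / (A + B * cos x) :=
  hf.div (by fun_prop) fun x => (add_mul_pos_of_abs_le_one h (abs_cos_le_one x)).ne'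

lemma Continuous.continuousOn_div_add_mul (h : |B| < A) {f : ℝ → ℝ} (hf : Continuous f) :
    ContinuousOn (fun t => f t / (A + B * t)) (Set.Icc (-1) 1) :=
  hf.continuousOn.div (by fun_prop) fun _ ht => (add_mul_pos_of_abs_le_one h (abs_le.mpr ht)).ne'

lemma integral_one_div_add_mul_cos (h : |B| < A) :
    ∫ x in (0:ℝ)..2 * π, 1 / (A + B * cos x) = 2 * π / √(A ^ 2 - B ^ 2) := by
  have hAB : 0 < A ^ 2 - B ^ 2 := sub_pos.mpr (sq_lt_sq' (abs_lt.mp h).1 (abs_lt.mp h).2)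
  set D := √(A ^ 2 - B ^ 2)
  have hD : 0 < D := sqrt_pos.mpr hAB
  have hD2 : D ^ 2 = A ^ 2 - B ^ 2 := sq_sqrt hAB.le
  -- Unlike the textbook primitive `2 arctan (√((A - B) / (A + B)) tan (x / 2)) / D`, which jumps
  -- at `x = π`, this one is smooth on all of `ℝ`.
  have hderiv : ∀ x, HasDerivAt (fun x => (x - 2 * arctan (B * sin x / (A + D + B * cos x))) / D)
      (1 / (A + B * cos x)) x := by
    intro x
    have hpos := add_mul_pos_of_abs_le_one h (abs_cos_le_one x)
    have hv : 0 < A + D + B * cos x := by linarith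
    refine (((hasDerivAt_id x).sub ((((hasDerivAt_sin x).const_mul B).div
      (((hasDerivAt_cos x).const_mul B).const_add (A + D)) hv.ne').arctan.const_mul 2)).div_const
      D).congr_deriv ?_
    simp only [Pi.div_apply]
    field_simp
    linear_combination
      (-B ^ 2 * (A + B * cos x + D)) * sin_sq_add_cos_sq x - (A + B * cos x + D) * hD2
  rw [intervalIntegral.integral_eq_sub_of_hasDerivAt (fun x _ => hderiv x)
    ((continuous_const.div_add_mul_cos h).intervalIntegrable _ _)]
  simp [sin_two_pi]

lemma mul_integral_mul_sin_div_add_mul_cos_mul_sin (h : |B| < A) :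
    B * ∫ x in (0:ℝ)..2 * π, B * sin x / (A + B * cos x) * sin x =
      2 * π * (A - √(A ^ 2 - B ^ 2)) := by
  have hAB : 0 < A ^ 2 - B ^ 2 := sub_pos.mpr (sq_lt_sq' (abs_lt.mp h).1 (abs_lt.mp h).2)
  have hD : 0 < √(A ^ 2 - B ^ 2) := sqrt_pos.mpr hAB
  have hD2 : √(A ^ 2 - B ^ 2) ^ 2 = A ^ 2 - B ^ 2 := sq_sqrt hAB.le
  have hsplit : ∀ x, B * (B * sin x / (A + B * cos x) * sin x) =
      (B ^ 2 - A ^ 2) * (1 / (A + B * cos x)) + (A - B * cos x) := by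
    intro x
    have := add_mul_pos_of_abs_le_one h (abs_cos_le_one x)
    field_simp
    linear_combination B ^ 2 * sin_sq_add_cos_sq x
  rw [← intervalIntegral.integral_const_mul]
  simp_rw [hsplit]
  rw [intervalIntegral.integral_add
      (((continuous_const.div_add_mul_cos h).intervalIntegrable _ _).const_mul _)
      ((by fun_prop : Continuous fun x => A - B * cos x).intervalIntegrable _ _),
    intervalIntegral.integral_const_mul, integral_one_div_add_mul_cos h,
    intervalIntegral.integral_sub intervalIntegrable_const
      ((continuous_cos.intervalIntegrable _ _).const_mul _),
    intervalIntegral.integral_const_mul, integral_cos]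
  field_simp
  simp only [intervalIntegral.integral_const, smul_eq_mul, sin_two_pi, sin_zero, sub_self,
    mul_zero, sub_zero]
  linear_combination 2 * π * hD2

lemma Function.Periodic.intervalIntegral_comp_sub {E : Type*} [NormedAddCommGroup E]
    [NormedSpace ℝ E] {f : ℝ → E} {T : ℝ} (hf : Function.Periodic f T) (d : ℝ) :
    ∫ x in (0:ℝ)..T, f (x - d) = ∫ x in (0:ℝ)..T, f x := by
  simpa [intervalIntegral.integral_comp_sub_right, sub_eq_neg_add] using
    hf.intervalIntegral_add_eq (-d) 0

lemma integral_mul_sin_div_add_mul_cos_comp_sub (h : |B| < A) (d : ℝ) :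
    ∫ x in (0:ℝ)..2 * π, B * sin (x - d) / (A + B * cos (x - d)) = 0 := by
  have hper : Function.Periodic (fun x => B * sin x / (A + B * cos x)) (2 * π) := fun x => by
    simp only [sin_add_two_pi, cos_add_two_pi]
  calc ∫ x in (0:ℝ)..2 * π, B * sin (x - d) / (A + B * cos (x - d))
      = ∫ x in (0:ℝ)..2 * π, B / (A + B * cos x) * sin x := by
        rw [hper.intervalIntegral_comp_sub d]
        simp only [div_mul_eq_mul_div, mul_comm]
    _ = 0 := integral_comp_cos_mul_sin_two_pi (continuous_const.continuousOn_div_add_mul h)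

end PeriodIntegrals

section Fourier

open Complex in
lemma integral_ofReal_mul_exp_I_mul {f : ℝ → ℝ} (hf : Continuous f) (a b : ℝ) :
    ∫ x in a..b, (f x : ℂ) * exp (I * x) =
      ↑(∫ x in a..b, f x * Real.cos x) + I * ↑(∫ x in a..b, f x * Real.sin x) := by
  have hpt : ∀ x : ℝ, (f x : ℂ) * exp (I * x) =
      ((f x * Real.cos x : ℝ) : ℂ) + I * ((f x * Real.sin x : ℝ) : ℂ) := by
    intro x
    rw [mul_comm I, exp_mul_I]
    push_cast
    ring
  simp_rw [hpt]
  rw [intervalIntegral.integral_add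
      ((by fun_prop : Continuous fun x => ((f x * Real.cos x : ℝ) : ℂ)).intervalIntegrable _ _)
      ((by fun_prop : Continuous fun x => I * ((f x * Real.sin x : ℝ) : ℂ)).intervalIntegrable _ _),
    intervalIntegral.integral_const_mul,
    intervalIntegral.integral_ofReal, intervalIntegral.integral_ofReal]

open Complex in
lemma integral_comp_sub_mul_exp_I_mul {f : ℝ → ℂ} (hf : Function.Periodic f (2 * π)) (d : ℝ) :
    ∫ x in (0:ℝ)..2 * π, f (x - d) * exp (I * x) =
      exp (I * d) * ∫ x in (0:ℝ)..2 * π, f x * exp (I * x) := by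
  have hper : Function.Periodic (fun x : ℝ => f x * exp (I * x)) (2 * π) := fun x => by
    simp only [hf x, ofReal_add, ofReal_mul, ofReal_ofNat, mul_add, Complex.exp_add,
      show I * (2 * π) = 2 * π * I by ring, exp_two_pi_mul_I, mul_one]
  rw [← hper.intervalIntegral_comp_sub d, ← intervalIntegral.integral_const_mul]
  refine intervalIntegral.integral_congr fun x _ => ?_
  rw [mul_left_comm, ← Complex.exp_add]
  push_cast
  ring_nf

open Complex in
lemma mul_integral_mul_sin_div_add_mul_cos_comp_sub_mul_exp {A B : ℝ} (h : |B| < A) (d : ℝ) :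
    (B : ℂ) * ∫ x in (0:ℝ)..2 * π,
        ((B * Real.sin (x - d) / (A + B * Real.cos (x - d)) : ℝ) : ℂ) * exp (I * x) =
      I * exp (I * d) * ↑(2 * π * (A - √(A ^ 2 - B ^ 2))) := by
  set g : ℝ → ℝ := fun x => B * Real.sin x / (A + B * Real.cos x)
  have hg : Continuous g := (continuous_const.mul Real.continuous_sin).div_add_mul_cos h
  have hper : Function.Periodic (fun x => (g x : ℂ)) (2 * π) := fun x => by
    simp only [g, Real.sin_add_two_pi, Real.cos_add_two_pi]
  have hcos : ∫ x in (0:ℝ)..2 * π, g x * Real.cos x = 0 :=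
    calc ∫ x in (0:ℝ)..2 * π, g x * Real.cos x
        = ∫ x in (0:ℝ)..2 * π, B * Real.cos x / (A + B * Real.cos x) * Real.sin x := by
          refine intervalIntegral.integral_congr fun x _ => ?_
          simp only [g, div_mul_eq_mul_div, mul_right_comm]
      _ = 0 := integral_comp_cos_mul_sin_two_pi
          ((continuous_const.mul continuous_id).continuousOn_div_add_mul h)
  rw [integral_comp_sub_mul_exp_I_mul hper d, integral_ofReal_mul_exp_I_mul hg, hcos,
    ← mul_integral_mul_sin_div_add_mul_cos_mul_sin h]
  push_cast
  ring

end Fourier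

lemma husimiQ_eq (r θ φ θ₁ φ₁ : ℝ) :
    husimiQ r θ φ θ₁ φ₁ =
      (1 + r * cos θ₁ * cos θ + r * sin θ₁ * sin θ * cos (φ₁ - φ)) / 2 := by
  unfold husimiQ
  ring

section Husimi

variable {r : ℝ}

lemma abs_mul_sin_mul_sin_lt (hr : |r| < 1) (θ θ₁ : ℝ) :
    |r * sin θ₁ * sin θ| < 1 + r * cos θ₁ * cos θ := by
  have hbound : ∀ y, |r * cos y| < 1 := fun y => by
    rw [abs_mul]
    exact (mul_le_of_le_one_right (abs_nonneg r) (abs_cos_le_one y)).trans_lt hr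
  have hsub := abs_lt.mp (hbound (θ₁ - θ))
  have hadd := abs_lt.mp (hbound (θ₁ + θ))
  rw [cos_sub] at hsub
  rw [cos_add] at hadd
  rw [abs_lt]
  constructor <;> linarith [hsub.1, hadd.1]

lemma husimiQ_pos (hr : |r| < 1) (θ φ θ₁ φ₁ : ℝ) : 0 < husimiQ r θ φ θ₁ φ₁ := by
  rw [husimiQ_eq]
  exact half_pos (add_mul_pos_of_abs_le_one (abs_mul_sin_mul_sin_lt hr θ θ₁) (abs_cos_le_one _))

lemma deriv_log_husimiQ (hr : |r| < 1) (θ φ θ₁ φ₁ : ℝ) :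
    deriv (fun φ' => log (husimiQ r θ φ' θ₁ φ₁)) φ =
      r * sin θ₁ * sin θ * sin (φ₁ - φ) /
        (1 + r * cos θ₁ * cos θ + r * sin θ₁ * sin θ * cos (φ₁ - φ)) := by
  have hQ : HasDerivAt (fun φ' => husimiQ r θ φ' θ₁ φ₁)
      (r * sin θ₁ * sin θ * sin (φ₁ - φ) / 2) φ := by
    simp only [husimiQ_eq]
    exact ((((hasDerivAt_id' φ).const_sub φ₁).cos.const_mul (r * sin θ₁ * sin θ)).const_add
      (1 + r * cos θ₁ * cos θ)).div_const 2 |>.congr_deriv (by ring)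
  have hpos := husimiQ_pos hr θ φ θ₁ φ₁
  rw [(hQ.log hpos.ne').deriv]
  rw [husimiQ_eq] at hpos ⊢
  field_simp

end Husimi

section PolarIntegral

lemma hasDerivAt_primitive_sqrt_sq_add {k : ℝ} (hk : 0 < k) (u : ℝ) :
    HasDerivAt (fun u => (u * √(u ^ 2 + k) + k * log (u + √(u ^ 2 + k))) / 2) √(u ^ 2 + k) u := by
  have hpos : 0 < u ^ 2 + k := by positivity
  have hq2 : √(u ^ 2 + k) ^ 2 = u ^ 2 + k := sq_sqrt hpos.le
  have hlog_pos : 0 < u + √(u ^ 2 + k) := by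
    have : |u| < √(u ^ 2 + k) := by
      rw [← sqrt_sq_eq_abs]
      exact sqrt_lt_sqrt (sq_nonneg u) (by linarith)
    linarith [neg_abs_le u]
  have hsqrt : HasDerivAt (fun u => √(u ^ 2 + k)) (2 * u / (2 * √(u ^ 2 + k))) u := by
    simpa using ((hasDerivAt_pow 2 u).add_const k).sqrt hpos.ne'
  refine ((((hasDerivAt_id' u).mul hsqrt).add
    ((((hasDerivAt_id' u).add hsqrt).log hlog_pos.ne').const_mul k)).div_const 2).congr_deriv ?_
  simp only [Pi.add_apply]
  field_simp
  linear_combination (-(√(u ^ 2 + k) + u)) * hq2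

lemma integral_one_add_mul_sub_sqrt {r c : ℝ} (hr : 0 < r) (hr1 : r < 1) (hc : c ^ 2 < 1) :
    ∫ t in (-1:ℝ)..1, (1 + r * c * t - √((r * t + c) ^ 2 + (1 - c ^ 2) * (1 - r ^ 2))) =
      (1 - c ^ 2) * (1 + (1 - r ^ 2) / (2 * r) * log ((1 - r) / (1 + r))) := by
  set k := (1 - c ^ 2) * (1 - r ^ 2)
  have hk : 0 < k := mul_pos (by linarith) (by nlinarith)
  have hF : ∀ t, HasDerivAt
      (fun t => t + r * c * t ^ 2 / 2 -
        ((r * t + c) * √((r * t + c) ^ 2 + k) + k * log (r * t + c + √((r * t + c) ^ 2 + k))) /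
          2 / r)
      (1 + r * c * t - √((r * t + c) ^ 2 + k)) t := by
    intro t
    have hΦ := (hasDerivAt_primitive_sqrt_sq_add hk (r * t + c)).comp t
      (((hasDerivAt_id' t).const_mul r).add_const c)
    refine (((hasDerivAt_id' t).add (((hasDerivAt_pow 2 t).const_mul (r * c)).div_const 2)).sub
      (hΦ.div_const r)).congr_deriv ?_
    field_simp
    ring
  rw [intervalIntegral.integral_eq_sub_of_hasDerivAt (fun t _ => hF t)
    ((by fun_prop : Continuous fun t => 1 + r * c * t - √((r * t + c) ^ 2 + k)).intervalIntegrable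
      _ _)]
  have hc1 : 0 < 1 + c := by nlinarith
  have hrc₁ : 0 < 1 + r * c := by nlinarith
  have hrc₂ : 0 < 1 - r * c := by nlinarith
  have hsqrt₁ : √((r * 1 + c) ^ 2 + k) = 1 + r * c := by
    rw [← sqrt_sq hrc₁.le]
    congr 1
    ring
  have hsqrt₂ : √((r * -1 + c) ^ 2 + k) = 1 - r * c := by
    rw [← sqrt_sq hrc₂.le]
    congr 1
    ring
  rw [hsqrt₁, hsqrt₂, show r * 1 + c + (1 + r * c) = (1 + c) * (1 + r) by ring,
    show r * -1 + c + (1 - r * c) = (1 + c) * (1 - r) by ring,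
    log_mul hc1.ne' (by linarith), log_mul hc1.ne' (by linarith),
    log_div (by linarith) (by linarith)]
  field_simp
  ring

variable {r θ : ℝ}

lemma integral_sin_mul_sub_sqrt (hr : 0 < r) (hr1 : r < 1) (hs : sin θ ≠ 0) :
    ∫ θ₁ in (0:ℝ)..π, sin θ₁ * (1 + r * cos θ₁ * cos θ -
        √((1 + r * cos θ₁ * cos θ) ^ 2 - (r * sin θ₁ * sin θ) ^ 2)) =
      sin θ ^ 2 * (1 + (1 - r ^ 2) / (2 * r) * log ((1 - r) / (1 + r))) := by
  have hc : cos θ ^ 2 < 1 := by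
    nlinarith [sin_sq_add_cos_sq θ, pow_pos (abs_pos.mpr hs) 2, sq_abs (sin θ)]
  have hradicand : ∀ θ₁, (1 + r * cos θ₁ * cos θ) ^ 2 - (r * sin θ₁ * sin θ) ^ 2 =
      (r * cos θ₁ + cos θ) ^ 2 + (1 - cos θ ^ 2) * (1 - r ^ 2) := fun θ₁ => by
    linear_combination (-r ^ 2 * sin θ ^ 2) * sin_sq_add_cos_sq θ₁ -
      r ^ 2 * (1 - cos θ₁ ^ 2) * sin_sq_add_cos_sq θ
  calc _ = ∫ θ₁ in (0:ℝ)..π, (1 + r * cos θ * cos θ₁ -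
          √((r * cos θ₁ + cos θ) ^ 2 + (1 - cos θ ^ 2) * (1 - r ^ 2))) * sin θ₁ := by
        refine intervalIntegral.integral_congr fun θ₁ _ => ?_
        rw [hradicand]
        ring
    _ = ∫ t in (-1:ℝ)..1, (1 + r * cos θ * t -
          √((r * t + cos θ) ^ 2 + (1 - cos θ ^ 2) * (1 - r ^ 2))) := by
        rw [integral_comp_cos_mul_sin (f := fun t => 1 + r * cos θ * t -
          √((r * t + cos θ) ^ 2 + (1 - cos θ ^ 2) * (1 - r ^ 2))) (by fun_prop), cos_pi, cos_zero]
    _ = _ := by rw [integral_one_add_mul_sub_sqrt hr hr1 hc, sin_sq]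

end PolarIntegral

section KernelIntegrals

variable {r : ℝ}

lemma integral_deriv_log_husimiQ (hr : |r| < 1) (θ φ θ₁ : ℝ) :
    ∫ φ₁ in (0:ℝ)..2 * π, deriv (fun φ' => log (husimiQ r θ φ' θ₁ φ₁)) φ = 0 := by
  simp_rw [deriv_log_husimiQ hr]
  exact integral_mul_sin_div_add_mul_cos_comp_sub (abs_mul_sin_mul_sin_lt hr θ θ₁) φ

lemma integral_deriv_log_husimiQ_mul_swKernelOne_self (hr : |r| < 1) (θ φ θ₁ : ℝ) (i : Fin 2) :
    ∫ φ₁ in (0:ℝ)..2 * π, ((deriv (fun φ' => log (husimiQ r θ φ' θ₁ φ₁)) φ : ℝ) : ℂ) *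
      swKernelOne θ₁ φ₁ i i * ((sin θ₁ / (2 * π) : ℝ) : ℂ) = 0 := by
  have hconst : ∀ φ₁, swKernelOne θ₁ φ₁ i i = swKernelOne θ₁ 0 i i := by
    fin_cases i <;> simp [swKernelOne]
  simp_rw [hconst, intervalIntegral.integral_mul_const, intervalIntegral.integral_ofReal,
    integral_deriv_log_husimiQ hr]
  simp

open Complex in
lemma integral_deriv_log_husimiQ_mul_swKernelOne_one_zero (hr : |r| < 1) (θ φ θ₁ : ℝ) :
    ∫ φ₁ in (0:ℝ)..2 * π, ((deriv (fun φ' => log (husimiQ r θ φ' θ₁ φ₁)) φ : ℝ) : ℂ) *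
      swKernelOne θ₁ φ₁ 1 0 * ((Real.sin θ₁ / (2 * π) : ℝ) : ℂ) =
    I * exp (I * φ) * ↑(3 / (2 * r * Real.sin θ) *
      (Real.sin θ₁ * (1 + r * Real.cos θ₁ * Real.cos θ -
        √((1 + r * Real.cos θ₁ * Real.cos θ) ^ 2 - (r * Real.sin θ₁ * Real.sin θ) ^ 2)))) := by
  calc _ = ((3 * Real.sin θ₁ / (4 * π * r * Real.sin θ) : ℝ) : ℂ) *
        ((r * Real.sin θ₁ * Real.sin θ : ℝ) * ∫ φ₁ in (0:ℝ)..2 * π,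
          ((r * Real.sin θ₁ * Real.sin θ * Real.sin (φ₁ - φ) /
            (1 + r * Real.cos θ₁ * Real.cos θ + r * Real.sin θ₁ * Real.sin θ * Real.cos (φ₁ - φ)) :
              ℝ) : ℂ) * exp (I * φ₁)) := by
        rw [← intervalIntegral.integral_const_mul, ← intervalIntegral.integral_const_mul]
        refine intervalIntegral.integral_congr fun φ₁ _ => ?_
        simp only [deriv_log_husimiQ hr, swKernelOne, Matrix.smul_apply, of_apply, cons_val',
          cons_val_zero, cons_val_fin_one, cons_val_one, smul_eq_mul]
        push_cast
        field_simp
        ring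
    _ = _ := by
        rw [mul_integral_mul_sin_div_add_mul_cos_comp_sub_mul_exp
          (abs_mul_sin_mul_sin_lt hr θ θ₁) φ]
        push_cast
        field_simp
        ring

end KernelIntegrals

lemma swKernelOne_isHermitian (θ φ : ℝ) : (swKernelOne θ φ).IsHermitian := by
  ext i j
  fin_cases i <;> fin_cases j <;>
    simp [swKernelOne, ← Complex.exp_conj, ← Complex.sin_conj, ← Complex.cos_conj]

lemma L3_isHermitian (r θ φ : ℝ) : (L3 r θ φ).IsHermitian := by
  ext i j
  fin_cases i <;> fin_cases j <;> simp [L3, ← Complex.exp_conj, ← Complex.sin_conj]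

lemma L3_apply_self (r θ φ : ℝ) (i : Fin 2) : L3 r θ φ i i = 0 := by
  fin_cases i <;> simp [L3]

lemma L3_apply_one_zero (r θ φ : ℝ) :
    L3 r θ φ 1 0 = ((3 / (4 * r ^ 2) * (2 * r + (1 - r ^ 2) * log ((1 - r) / (1 + r))) : ℝ) : ℂ) *
      (Complex.I * Complex.exp (Complex.I * φ) * sin θ) := by
  simp [L3]

lemma star_integral_integral_deriv_log_husimiQ_mul_swKernelOne (r θ φ : ℝ) (i j : Fin 2) :
    star (∫ θ₁ in (0:ℝ)..π, ∫ φ₁ in (0:ℝ)..(2 * π),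
        ((deriv (fun φ' => log (husimiQ r θ φ' θ₁ φ₁)) φ : ℝ) : ℂ) *
          swKernelOne θ₁ φ₁ i j * ((sin θ₁ / (2 * π) : ℝ) : ℂ)) =
      ∫ θ₁ in (0:ℝ)..π, ∫ φ₁ in (0:ℝ)..(2 * π),
        ((deriv (fun φ' => log (husimiQ r θ φ' θ₁ φ₁)) φ : ℝ) : ℂ) *
          swKernelOne θ₁ φ₁ j i * ((sin θ₁ / (2 * π) : ℝ) : ℂ) := by
  rw [Complex.star_def, ← intervalIntegral.intervalIntegral_conj]
  refine intervalIntegral.integral_congr fun θ₁ _ => ?_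
  rw [← intervalIntegral.intervalIntegral_conj]
  refine intervalIntegral.integral_congr fun φ₁ _ => ?_
  rw [← (swKernelOne_isHermitian θ₁ φ₁).apply j i, Complex.star_def]
  simp only [map_mul, Complex.conj_ofReal]

lemma integral_integral_deriv_log_husimiQ_mul_swKernelOne_one_zero {r : ℝ} (hr : 0 < r)
    (hr1 : r < 1) (θ φ : ℝ) :
    (∫ θ₁ in (0:ℝ)..π, ∫ φ₁ in (0:ℝ)..(2 * π),
        ((deriv (fun φ' => log (husimiQ r θ φ' θ₁ φ₁)) φ : ℝ) : ℂ) *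
          swKernelOne θ₁ φ₁ 1 0 * ((sin θ₁ / (2 * π) : ℝ) : ℂ)) =
      L3 r θ φ 1 0 := by
  simp_rw [integral_deriv_log_husimiQ_mul_swKernelOne_one_zero (abs_lt.mpr ⟨by linarith, hr1⟩)]
  rw [intervalIntegral.integral_const_mul, intervalIntegral.integral_ofReal,
    intervalIntegral.integral_const_mul]
  by_cases hs : sin θ = 0
  · simp [L3_apply_one_zero, hs]
  rw [integral_sin_mul_sub_sqrt hr hr1 hs, L3_apply_one_zero]
  have hr0 : (r : ℂ) ≠ 0 := by exact_mod_cast hr.ne'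
  have hs0 : (sin θ : ℂ) ≠ 0 := by exact_mod_cast hs
  push_cast
  field_simp
  ring

theorem L3_integral_formula (r θ φ : ℝ) (hr : 0 < r) (hr1 : r < 1) (i j : Fin 2) :
    (∫ θ₁ in (0:ℝ)..π, ∫ φ₁ in (0:ℝ)..(2 * π),
        ((deriv (fun φ' => Real.log (husimiQ r θ φ' θ₁ φ₁)) φ : ℝ) : ℂ) *
          swKernelOne θ₁ φ₁ i j * ((Real.sin θ₁ / (2 * π) : ℝ) : ℂ)) =
      L3 r θ φ i j := by
  have hr' : |r| < 1 := abs_lt.mpr ⟨by linarith, hr1⟩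
  fin_cases i <;> fin_cases j <;> simp only [Fin.zero_eta, Fin.mk_one]
  · simp only [integral_deriv_log_husimiQ_mul_swKernelOne_self hr', intervalIntegral.integral_zero,
      L3_apply_self]
  · rw [← star_integral_integral_deriv_log_husimiQ_mul_swKernelOne,
      integral_integral_deriv_log_husimiQ_mul_swKernelOne_one_zero hr hr1,
      (L3_isHermitian r θ φ).apply]
  · exact integral_integral_deriv_log_husimiQ_mul_swKernelOne_one_zero hr hr1 θ φ
  · simp only [integral_deriv_log_husimiQ_mul_swKernelOne_self hr', intervalIntegral.integral_zero,
      L3_apply_self]
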